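/- arXiv:1804.01071 — 2 statements merged into one kernel-verified Lean document; each statement's English description precedes it below -/
import Mathlib

section
/- Let d ≥ 1, let A be a symmetric d×d real matrix, and let X be any d×d real matrix. If (i,j) is drawn uniformly at random from {1,…,d}² and A_{(i,j)} := d² A_{ij} e_i e_jᵀ, then E[ A_{(i,j)}ᵀ X A_{(i,j)} ] = d² diag( A diag(X) A ), where the expectation is the average over all d² pairs (i,j). -/
open Matrix BigOperators

/-- The rank-one sample matrix `A_{(i,j)} = d² A_{ij} e_i e_jᵀ`. -/
noncomputable def sampleMat {d : ℕ} (A : Matrix (Fin d) (Fin d) ℝ) (p : Fin d × Fin d) :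
    Matrix (Fin d) (Fin d) ℝ :=
  ((d : ℝ) ^ 2 * A p.1 p.2) • Matrix.single p.1 p.2 1

/-- `P_T(ω) = (I + η A_{(i_T,j_T)}) ⋯ (I + η A_{(i_1,j_1)})`. -/
noncomputable def prodMat {d : ℕ} (A : Matrix (Fin d) (Fin d) ℝ) (η : ℝ) :
    (T : ℕ) → (Fin T → Fin d × Fin d) → Matrix (Fin d) (Fin d) ℝ
  | 0, _ => 1
  | (T + 1), ω => (1 + η • sampleMat A (ω (Fin.last T))) * prodMat A η T (fun t => ω t.castSucc)

/-- `E[B_T]`: the average of `P_T(ω)ᵀ ((1-ε)I - A) P_T(ω)` over all sequences `ω`. -/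
noncomputable def EB {d : ℕ} (A : Matrix (Fin d) (Fin d) ℝ) (η ε : ℝ) (T : ℕ) :
    Matrix (Fin d) (Fin d) ℝ :=
  (Fintype.card (Fin T → Fin d × Fin d) : ℝ)⁻¹ •
    ∑ ω : Fin T → Fin d × Fin d,
      (prodMat A η T ω)ᵀ * ((1 - ε) • (1 : Matrix (Fin d) (Fin d) ℝ) - A) * prodMat A η T ω

/-- The operator (spectral) norm of a matrix, as a map on Euclidean space. -/
noncomputable def opNorm {d : ℕ} (M : Matrix (Fin d) (Fin d) ℝ) : ℝ :=
  ‖Matrix.toEuclideanCLM (𝕜 := ℝ) M‖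

/-- The maximum Euclidean column norm `‖M‖_{1→2} = max_j ‖M e_j‖₂`. -/
noncomputable def colNorm {d : ℕ} (M : Matrix (Fin d) (Fin d) ℝ) : ℝ :=
  ⨆ j : Fin d, Real.sqrt (∑ i : Fin d, (M i j) ^ 2)

/-- `diag(M)`: the diagonal matrix with the same diagonal as `M`. -/
def diagPart {d : ℕ} (M : Matrix (Fin d) (Fin d) ℝ) : Matrix (Fin d) (Fin d) ℝ :=
  Matrix.diagonal M.diag

/-! Conjugating `X` by the rank-one matrix `c e_i e_jᵀ` gives `c² X_ii e_j e_jᵀ`, so the average is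
diagonal with `j`-th entry `d² ∑_i A_ij² X_ii`, which for symmetric `A` is `d² (A diag(X) A)_jj`. -/

lemma sampleMat_eq_single {d : ℕ} (A : Matrix (Fin d) (Fin d) ℝ) (p : Fin d × Fin d) :
    sampleMat A p = single p.1 p.2 ((d : ℝ) ^ 2 * A p.1 p.2) := by
  rw [sampleMat, smul_single, smul_eq_mul, mul_one]

lemma transpose_single_mul_mul_single {n R : Type*} [Fintype n] [DecidableEq n] [CommSemiring R]
    (i j : n) (c : R) (X : Matrix n n R) :
    (single i j c)ᵀ * X * single i j c = single j j (c ^ 2 * X i i) := by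
  rw [transpose_single, single_mul_mul_single, mul_comm, ← mul_assoc, sq]

lemma sum_transpose_sampleMat_mul_mul_sampleMat {d : ℕ} (A X : Matrix (Fin d) (Fin d) ℝ) :
    ∑ p, (sampleMat A p)ᵀ * X * sampleMat A p
      = diagonal fun j => ∑ i, ((d : ℝ) ^ 2 * A i j) ^ 2 * X i i := by
  simp only [sampleMat_eq_single, transpose_single_mul_mul_single]
  rw [Fintype.sum_prod_type, Finset.sum_comm, ← sum_single_eq_diagonal]
  exact Finset.sum_congr rfl fun j _ => (map_sum (singleAddMonoidHom (α := ℝ) j j) _ _).symm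

lemma Matrix.IsSymm.mul_diagonal_mul_apply_self {n R : Type*} [Fintype n] [DecidableEq n]
    [CommSemiring R] {A : Matrix n n R} (hA : A.IsSymm) (x : n → R) (j : n) :
    (A * diagonal x * A) j j = ∑ i, A i j ^ 2 * x i := by
  rw [mul_apply]
  refine Finset.sum_congr rfl fun i _ => ?_
  rw [mul_diagonal, hA.apply j i]
  ring

theorem stmt2_general {d : ℕ} (A : Matrix (Fin d) (Fin d) ℝ) (hsymm : A.IsSymm)
    (X : Matrix (Fin d) (Fin d) ℝ) :
    (Fintype.card (Fin d × Fin d) : ℝ)⁻¹ •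
        ∑ p : Fin d × Fin d, (sampleMat A p)ᵀ * X * sampleMat A p
      = ((d : ℝ) ^ 2) • diagPart (A * diagPart X * A) := by
  unfold diagPart
  rw [sum_transpose_sampleMat_mul_mul_sampleMat, Fintype.card_prod, Fintype.card_fin,
    ← diagonal_smul, ← diagonal_smul]
  congr 1
  ext j
  have hd : (d : ℝ) ≠ 0 := Nat.cast_ne_zero.mpr j.pos.ne'
  simp only [Pi.smul_apply, smul_eq_mul, diag_apply, hsymm.mul_diagonal_mul_apply_self,
    Finset.mul_sum, Nat.cast_mul]
  refine Finset.sum_congr rfl fun i _ => ?_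
  field_simp

theorem stmt2 {d : ℕ} (hd : 1 ≤ d) (A : Matrix (Fin d) (Fin d) ℝ) (hsymm : A.IsSymm)
    (X : Matrix (Fin d) (Fin d) ℝ) :
    (Fintype.card (Fin d × Fin d) : ℝ)⁻¹ •
        ∑ p : Fin d × Fin d, (sampleMat A p)ᵀ * X * sampleMat A p
      = ((d : ℝ) ^ 2) • diagPart (A * diagPart X * A) :=
  stmt2_general A hsymm X
end

section
/- Let d ≥ 1, let A be a symmetric d×d real matrix with ‖A‖ ≤ 1, let η > 0, ε ∈ ℝ, and let w₀ ∈ ℝ^d be a unit vector. Let (v_1,…,v_d) be an orthonormal basis of eigenvectors of A with corresponding eigenvalues s_1,…,s_d. Then for every integer T ≥ 1, E[⟨w₀, B_T w₀⟩] ≤ Σ_{j=1}^d (1 + 2η s_j)^T (1 − ε − s_j) ⟨w₀, v_j⟩² + η² d² Σ_{i=1}^T (1 + 2η)^{T−i} ‖diag(E[B_{i−1}])‖. -/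
open Matrix BigOperators

/-!
Averaging over the last sampled pair gives an exact recursion: since `E[A_{(i,j)}] = A` and
`E[A_{(i,j)}ᵀ M A_{(i,j)}] = d² diag(Aᵀ diag(M) A)`,
`E[B_{T+1}] = L(E[B_T]) + (ηd)² diag(Aᵀ diag(E[B_T]) A)` with `L M = M + η(AᵀM + MA)`.
Unrolled, `E[B_T] = L^T((1-ε)I - A) + Σ_{i<T} L^{T-1-i}((ηd)² diag(Aᵀ diag(E[B_i]) A))`.
The projectors `v_j v_jᵀ` are eigenvectors of `L` with eigenvalues `1 + 2ηs_j`, which evaluates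
the first term exactly. The second is bounded in operator norm, using `‖L M‖ ≤ (1 + 2η‖A‖)‖M‖`
and the pinching inequality `‖diag M‖ ≤ ‖M‖`.
-/

open scoped Matrix.Norms.L2Operator

namespace Module.End

variable {R M : Type*} [CommSemiring R] [AddCommMonoid M] [Module R M]

theorem pow_apply_of_apply_eq_smul {f : Module.End R M} {c : R} {x : M} (h : f x = c • x)
    (n : ℕ) : (f ^ n) x = c ^ n • x := by
  induction n with
  | zero => simp
  | succ n ih => rw [pow_succ', Module.End.mul_apply, ih, map_smul, h, smul_smul, pow_succ]

theorem eq_pow_apply_add_sum (f : Module.End R M) {x y : ℕ → M}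
    (h : ∀ n, x (n + 1) = f (x n) + y n) (n : ℕ) :
    x n = (f ^ n) (x 0) + ∑ i ∈ Finset.range n, (f ^ (n - 1 - i)) (y i) := by
  induction n with
  | zero => simp
  | succ n ih =>
    have hshift : ∀ i ∈ Finset.range n, f ((f ^ (n - 1 - i)) (y i)) = (f ^ (n - i)) (y i) := by
      intro i hi
      rw [← Module.End.mul_apply, ← pow_succ']
      have := Finset.mem_range.mp hi
      congr 2
      omega
    rw [h, ih, map_add, map_sum, Finset.sum_congr rfl hshift, Finset.sum_range_succ,
      ← Module.End.mul_apply, ← pow_succ']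
    simp [add_assoc]

end Module.End

namespace Matrix

variable {n : Type*} [Fintype n]

theorem abs_dotProduct_mulVec_le_l2_opNorm [DecidableEq n] (M : Matrix n n ℝ) (u w : n → ℝ) :
    |u ⬝ᵥ (M *ᵥ w)| ≤ ‖M‖ * ‖WithLp.toLp 2 u‖ * ‖WithLp.toLp 2 w‖ := by
  rw [← inner_toEuclideanCLM, mul_assoc, mul_left_comm]
  exact (abs_real_inner_le_norm _ _).trans
    (mul_le_mul_of_nonneg_left (ContinuousLinearMap.le_opNorm _ _) (norm_nonneg _))

theorem abs_apply_le_l2_opNorm [DecidableEq n] (M : Matrix n n ℝ) (i j : n) : |M i j| ≤ ‖M‖ := by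
  simpa [PiLp.norm_single] using
    abs_dotProduct_mulVec_le_l2_opNorm M (Pi.single i 1) (Pi.single j 1)

theorem dotProduct_mulVec_le_l2_opNorm [DecidableEq n] (M : Matrix n n ℝ) {w : n → ℝ}
    (hw : ∑ i, w i ^ 2 = 1) : w ⬝ᵥ (M *ᵥ w) ≤ ‖M‖ := by
  have hw' : ‖WithLp.toLp 2 w‖ = 1 := by simp [EuclideanSpace.norm_eq, hw]
  simpa [hw'] using (le_abs_self _).trans (abs_dotProduct_mulVec_le_l2_opNorm M w w)

variable {R : Type*} [CommRing R]

theorem sum_vecMulVec_self_eq_one [DecidableEq n] {v : n → n → R}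
    (horth : ∀ i j, v i ⬝ᵥ v j = if i = j then 1 else 0) :
    ∑ j, vecMulVec (v j) (v j) = 1 := by
  have hrows : of v * (of v)ᵀ = 1 := by
    ext i j
    simpa [mul_apply, one_apply, dotProduct] using horth i j
  rw [← mul_eq_one_comm.mp hrows]
  ext a b
  simp [sum_apply, mul_apply, vecMulVec_apply]

theorem dotProduct_vecMulVec_self_mulVec (w x : n → R) :
    w ⬝ᵥ (vecMulVec x x *ᵥ w) = (w ⬝ᵥ x) ^ 2 := by
  simp [vecMulVec_mulVec, dotProduct_comm x w, sq]

end Matrix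

section

variable {d : ℕ} (A : Matrix (Fin d) (Fin d) ℝ) (η : ℝ)

theorem norm_diagPart_le (M : Matrix (Fin d) (Fin d) ℝ) : ‖diagPart M‖ ≤ ‖M‖ := by
  rw [diagPart, Matrix.l2_opNorm_diagonal]
  exact pi_norm_le_iff_of_nonneg (norm_nonneg M) |>.mpr fun i => M.abs_apply_le_l2_opNorm i i

theorem norm_diagPart_transpose_mul_diagPart_mul_le (M : Matrix (Fin d) (Fin d) ℝ) :
    ‖diagPart (Aᵀ * diagPart M * A)‖ ≤ ‖A‖ ^ 2 * ‖diagPart M‖ := by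
  have hAt : ‖Aᵀ‖ = ‖A‖ := by simpa using Matrix.l2_opNorm_conjTranspose A
  calc ‖diagPart (Aᵀ * diagPart M * A)‖ ≤ ‖Aᵀ * diagPart M * A‖ := norm_diagPart_le _
    _ ≤ ‖Aᵀ‖ * ‖diagPart M‖ * ‖A‖ := norm_mul₃_le
    _ = ‖A‖ ^ 2 * ‖diagPart M‖ := by rw [hAt]; ring

theorem diagPart_transpose_mul_diagPart_mul (M : Matrix (Fin d) (Fin d) ℝ) :
    diagPart (Aᵀ * diagPart M * A) = Matrix.diagonal fun j => ∑ i, A i j ^ 2 * M i i := by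
  simp only [diagPart]
  congr 1
  ext j
  simp only [Matrix.diag_apply, Matrix.mul_apply, Matrix.diagonal_apply, Matrix.transpose_apply,
    mul_ite, mul_zero, Finset.sum_ite_eq', Finset.mem_univ, if_true]
  exact Finset.sum_congr rfl fun i _ => by ring

theorem sum_sampleMat : ∑ p, sampleMat A p = ((d : ℝ) ^ 2) • A := by
  ext a b
  simp [sampleMat, Matrix.sum_apply, Fintype.sum_prod_type, Matrix.single_apply, ite_and]

theorem sum_transpose_sampleMat_mul_sampleMat (M : Matrix (Fin d) (Fin d) ℝ) :
    ∑ p, (sampleMat A p)ᵀ * M * sampleMat A p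
      = ((d : ℝ) ^ 4) • diagPart (Aᵀ * diagPart M * A) := by
  rw [diagPart_transpose_mul_diagPart_mul]
  ext a b
  simp only [sampleMat, Matrix.transpose_smul, Matrix.transpose_single, Matrix.smul_mul,
    Matrix.mul_smul, Matrix.single_mul_mul_single, Matrix.sum_apply, Fintype.sum_prod_type,
    Matrix.smul_apply, Matrix.single_apply, Matrix.diagonal_apply, smul_eq_mul]
  rcases eq_or_ne a b with rfl | hab
  · simp only [and_self, mul_ite, mul_zero, Finset.sum_ite_eq', Finset.mem_univ, if_true,
      Finset.mul_sum]
    exact Finset.sum_congr rfl fun i _ => by ring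
  · simp [hab, ite_and]
theorem sum_conj_one_add_smul_sampleMat (M : Matrix (Fin d) (Fin d) ℝ) :
    ∑ p, (1 + η • sampleMat A p)ᵀ * M * (1 + η • sampleMat A p)
      = ((d : ℝ) ^ 2) • (M + η • (Aᵀ * M + M * A)
          + (η * d) ^ 2 • diagPart (Aᵀ * diagPart M * A)) := by
  have hexpand : ∀ p, (1 + η • sampleMat A p)ᵀ * M * (1 + η • sampleMat A p)
      = M + η • ((sampleMat A p)ᵀ * M + M * sampleMat A p)
        + η ^ 2 • ((sampleMat A p)ᵀ * M * sampleMat A p) := fun p => by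
    simp only [Matrix.transpose_add, Matrix.transpose_one, Matrix.transpose_smul, Matrix.add_mul,
      Matrix.mul_add, Matrix.one_mul, Matrix.mul_one, Matrix.smul_mul, Matrix.mul_smul, smul_add,
      smul_smul, ← sq]
    abel
  have hcard : ((Finset.univ : Finset (Fin d × Fin d)).card : ℝ) = (d : ℝ) ^ 2 := by
    simp [sq]
  simp only [hexpand, Finset.sum_add_distrib, ← Finset.smul_sum, ← Finset.sum_mul,
    ← Finset.mul_sum, ← Matrix.transpose_sum, sum_sampleMat, sum_transpose_sampleMat_mul_sampleMat,
    Finset.sum_const, ← Nat.cast_smul_eq_nsmul ℝ, hcard, Matrix.transpose_smul,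
    Matrix.smul_mul, Matrix.mul_smul]
  module

theorem prodMat_cons {T : ℕ} (p : Fin d × Fin d) (τ : Fin T → Fin d × Fin d) :
    prodMat A η (T + 1) (Fin.cons p τ) = prodMat A η T τ * (1 + η • sampleMat A p) := by
  induction T with
  | zero => simp [prodMat]
  | succ T ih =>
    have hinit : (fun t : Fin (T + 1) => (Fin.cons p τ : Fin (T + 2) → _) t.castSucc)
        = Fin.cons p fun t => τ t.castSucc := by
      funext t
      cases t using Fin.cases <;> rfl
    rw [prodMat, Fin.cons_last, hinit, ih, prodMat, Matrix.mul_assoc]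

noncomputable def linearizedStep : Module.End ℝ (Matrix (Fin d) (Fin d) ℝ) where
  toFun M := M + η • (Aᵀ * M + M * A)
  map_add' M N := by
    simp only [Matrix.mul_add, Matrix.add_mul, smul_add]
    abel
  map_smul' c M := by
    simp only [Matrix.mul_smul, Matrix.smul_mul, ← smul_add, smul_comm η c, RingHom.id_apply]

theorem linearizedStep_apply (M : Matrix (Fin d) (Fin d) ℝ) :
    linearizedStep A η M = M + η • (Aᵀ * M + M * A) := rfl

theorem EB_succ (ε : ℝ) (T : ℕ) :
    EB A η ε (T + 1) = linearizedStep A η (EB A η ε T)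
      + (η * d) ^ 2 • diagPart (Aᵀ * diagPart (EB A η ε T) * A) := by
  rcases Nat.eq_zero_or_pos d with rfl | hd
  · exact Subsingleton.elim _ _
  set C := (1 - ε) • (1 : Matrix (Fin d) (Fin d) ℝ) - A
  have hc : (d : ℝ) ^ 2 ≠ 0 := by positivity
  have hcard (T : ℕ) : (Fintype.card (Fin T → Fin d × Fin d) : ℝ) = ((d : ℝ) ^ 2) ^ T := by
    simp [sq]
  have hsum : ∑ ω : Fin T → Fin d × Fin d, (prodMat A η T ω)ᵀ * C * prodMat A η T ω
      = ((d : ℝ) ^ 2) ^ T • EB A η ε T := by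
    rw [EB, hcard, smul_smul, mul_inv_cancel₀ (pow_ne_zero _ hc), one_smul]
  have hstep :
      ∑ ω : Fin (T + 1) → Fin d × Fin d, (prodMat A η (T + 1) ω)ᵀ * C * prodMat A η (T + 1) ω
        = ∑ p, (1 + η • sampleMat A p)ᵀ * (((d : ℝ) ^ 2) ^ T • EB A η ε T)
            * (1 + η • sampleMat A p) := by
    rw [← hsum, ← (Fin.consEquiv _).sum_comp, Fintype.sum_prod_type]
    simp only [Fin.consEquiv, Equiv.coe_fn_mk, prodMat_cons, Matrix.transpose_mul,
      Finset.mul_sum, Finset.sum_mul, Matrix.mul_assoc]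
  rw [EB, hstep, hcard]
  simp only [Matrix.smul_mul, Matrix.mul_smul, ← Finset.smul_sum, sum_conj_one_add_smul_sampleMat,
    smul_smul, linearizedStep_apply]
  rw [← pow_succ, inv_mul_cancel₀ (pow_ne_zero _ hc), one_smul]

theorem EB_eq_pow_add_sum (ε : ℝ) (T : ℕ) :
    EB A η ε T = (linearizedStep A η ^ T) ((1 - ε) • 1 - A)
      + ∑ i ∈ Finset.range T, (linearizedStep A η ^ (T - 1 - i))
          ((η * d) ^ 2 • diagPart (Aᵀ * diagPart (EB A η ε i) * A)) := by
  have h0 : EB A η ε 0 = (1 - ε) • 1 - A := by simp [EB, prodMat]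
  rw [← h0]
  exact Module.End.eq_pow_apply_add_sum _ (EB_succ A η ε) T

theorem norm_linearizedStep_le (hη : 0 ≤ η) (M : Matrix (Fin d) (Fin d) ℝ) :
    ‖linearizedStep A η M‖ ≤ (1 + 2 * η * ‖A‖) * ‖M‖ := by
  have hAt : ‖Aᵀ‖ = ‖A‖ := by simpa using Matrix.l2_opNorm_conjTranspose A
  calc ‖linearizedStep A η M‖ ≤ ‖M‖ + η * (‖Aᵀ‖ * ‖M‖ + ‖M‖ * ‖A‖) := by
        rw [linearizedStep_apply]
        refine (norm_add_le _ _).trans (add_le_add_right ?_ _)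
        rw [norm_smul, Real.norm_of_nonneg hη]
        exact mul_le_mul_of_nonneg_left
          ((norm_add_le _ _).trans (add_le_add (norm_mul_le _ _) (norm_mul_le _ _))) hη
    _ = (1 + 2 * η * ‖A‖) * ‖M‖ := by rw [hAt]; ring

theorem norm_linearizedStep_pow_le (hη : 0 ≤ η) (k : ℕ) (M : Matrix (Fin d) (Fin d) ℝ) :
    ‖(linearizedStep A η ^ k) M‖ ≤ (1 + 2 * η * ‖A‖) ^ k * ‖M‖ := by
  induction k with
  | zero => simp
  | succ k ih =>
    have hc : 0 ≤ 1 + 2 * η * ‖A‖ := by have := norm_nonneg A; positivity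
    rw [pow_succ', Module.End.mul_apply, pow_succ', mul_assoc]
    exact (norm_linearizedStep_le A η hη _).trans (mul_le_mul_of_nonneg_left ih hc)

theorem linearizedStep_vecMulVec_self (hsymm : A.IsSymm) {x : Fin d → ℝ} {c : ℝ}
    (hx : A *ᵥ x = c • x) :
    linearizedStep A η (Matrix.vecMulVec x x) = (1 + 2 * η * c) • Matrix.vecMulVec x x := by
  rw [linearizedStep_apply, Matrix.mul_vecMulVec, Matrix.vecMulVec_mul, ← Matrix.mulVec_transpose,
    hsymm.eq, hx, Matrix.smul_vecMulVec, Matrix.vecMulVec_smul]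
  module

theorem dotProduct_linearizedStep_pow_mulVec_eq_sum (hsymm : A.IsSymm) (ε : ℝ)
    {v : Fin d → Fin d → ℝ} {s : Fin d → ℝ}
    (horth : ∀ i j, v i ⬝ᵥ v j = if i = j then (1 : ℝ) else 0)
    (heig : ∀ j, A *ᵥ v j = s j • v j) (w : Fin d → ℝ) (T : ℕ) :
    w ⬝ᵥ ((linearizedStep A η ^ T) ((1 - ε) • 1 - A) *ᵥ w)
      = ∑ j, (1 + 2 * η * s j) ^ T * (1 - ε - s j) * (w ⬝ᵥ v j) ^ 2 := by
  have hone := Matrix.sum_vecMulVec_self_eq_one horth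
  have hA : A = ∑ j, s j • Matrix.vecMulVec (v j) (v j) := by
    conv_lhs => rw [← A.mul_one, ← hone, Finset.mul_sum]
    simp only [Matrix.mul_vecMulVec, heig, Matrix.smul_vecMulVec]
  have hC : (1 - ε) • 1 - A = ∑ j, (1 - ε - s j) • Matrix.vecMulVec (v j) (v j) := by
    rw [← hone, hA, Finset.smul_sum, ← Finset.sum_sub_distrib]
    simp only [sub_smul]
  simp only [hC, map_sum, map_smul, Module.End.pow_apply_of_apply_eq_smul
    (linearizedStep_vecMulVec_self A η hsymm (heig _)), smul_smul, Matrix.sum_mulVec,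
    Matrix.smul_mulVec, dotProduct_sum, dotProduct_smul, Matrix.dotProduct_vecMulVec_self_mulVec,
    smul_eq_mul]
  exact Finset.sum_congr rfl fun j _ => by ring

theorem norm_linearizedStep_pow_noise_le (hA : ‖A‖ ≤ 1) (hη : 0 ≤ η) (k : ℕ)
    (M : Matrix (Fin d) (Fin d) ℝ) :
    ‖(linearizedStep A η ^ k) ((η * d) ^ 2 • diagPart (Aᵀ * diagPart M * A))‖
      ≤ η ^ 2 * d ^ 2 * ((1 + 2 * η) ^ k * ‖diagPart M‖) := by
  have hgrowth : (1 + 2 * η * ‖A‖) ^ k ≤ (1 + 2 * η) ^ k := by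
    have := norm_nonneg A
    gcongr (1 + ?_) ^ k
    exact mul_le_of_le_one_right (by positivity) hA
  have hnoise : ‖diagPart (Aᵀ * diagPart M * A)‖ ≤ ‖diagPart M‖ :=
    (norm_diagPart_transpose_mul_diagPart_mul_le A M).trans
      (mul_le_of_le_one_left (norm_nonneg _) (pow_le_one₀ (norm_nonneg A) hA))
  calc _ ≤ (1 + 2 * η * ‖A‖) ^ k * ‖(η * d) ^ 2 • diagPart (Aᵀ * diagPart M * A)‖ :=
        norm_linearizedStep_pow_le A η hη k _
    _ ≤ (1 + 2 * η) ^ k * ((η * d) ^ 2 * ‖diagPart M‖) := by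
        rw [norm_smul, Real.norm_of_nonneg (by positivity)]
        gcongr
    _ = _ := by ring

end

theorem stmt3_general {d : ℕ} (A : Matrix (Fin d) (Fin d) ℝ) (hsymm : A.IsSymm)
    (hA : opNorm A ≤ 1) (η ε : ℝ) (hη : 0 < η)
    (w₀ : Fin d → ℝ) (hw : ∑ i, (w₀ i) ^ 2 = 1)
    (v : Fin d → Fin d → ℝ) (s : Fin d → ℝ)
    (horth : ∀ i j, v i ⬝ᵥ v j = if i = j then (1 : ℝ) else 0)
    (heig : ∀ j, A *ᵥ v j = s j • v j)
    (T : ℕ) :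
    w₀ ⬝ᵥ (EB A η ε T *ᵥ w₀)
      ≤ ∑ j, (1 + 2 * η * s j) ^ T * (1 - ε - s j) * (w₀ ⬝ᵥ v j) ^ 2
        + η ^ 2 * (d : ℝ) ^ 2 *
          ∑ i ∈ Finset.range T, (1 + 2 * η) ^ (T - 1 - i) * opNorm (diagPart (EB A η ε i)) := by
  rw [EB_eq_pow_add_sum, Matrix.add_mulVec, dotProduct_add,
    dotProduct_linearizedStep_pow_mulVec_eq_sum A η hsymm ε horth heig]
  refine add_le_add_right ?_ _
  rw [Finset.mul_sum]
  refine (Matrix.dotProduct_mulVec_le_l2_opNorm _ hw).trans ((norm_sum_le _ _).trans ?_)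
  exact Finset.sum_le_sum fun i _ => norm_linearizedStep_pow_noise_le A η hA hη.le _ _

theorem stmt3 {d : ℕ} (hd : 1 ≤ d) (A : Matrix (Fin d) (Fin d) ℝ) (hsymm : A.IsSymm)
    (hA : opNorm A ≤ 1) (η ε : ℝ) (hη : 0 < η)
    (w₀ : Fin d → ℝ) (hw : ∑ i, (w₀ i) ^ 2 = 1)
    (v : Fin d → Fin d → ℝ) (s : Fin d → ℝ)
    (horth : ∀ i j, v i ⬝ᵥ v j = if i = j then (1 : ℝ) else 0)
    (heig : ∀ j, A *ᵥ v j = s j • v j)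
    (T : ℕ) (hT : 1 ≤ T) :
    w₀ ⬝ᵥ (EB A η ε T *ᵥ w₀)
      ≤ ∑ j, (1 + 2 * η * s j) ^ T * (1 - ε - s j) * (w₀ ⬝ᵥ v j) ^ 2
        + η ^ 2 * (d : ℝ) ^ 2 *
          ∑ i ∈ Finset.range T, (1 + 2 * η) ^ (T - 1 - i) * opNorm (diagPart (EB A η ε i)) :=
  stmt3_general A hsymm hA η ε hη w₀ hw v s horth heig T
end
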